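/- arXiv:2204.01418 — 3 statements merged into one kernel-verified Lean document; each statement's English description precedes it below -/
import Mathlib

section
/- Let x₁ be uniform on the integer interval [α₁, β₁] and x₂ be uniform on the integer interval [α₂, β₂], independent of x₁, where 0 ≤ α₂ ≤ β₂ ≤ β₁ − α₁ are integers. Then d_TV(x₁, x₁ + x₂) ≤ β₂ / (β₁ − α₁ + 1). -/
/-- Probability mass function of the uniform distribution on the integers `{α,...,β}`. -/
noncomputable def unifPMF (α β : ℤ) : ℤ → ℝ :=
  fun k => if α ≤ k ∧ k ≤ β then 1 / ((β : ℝ) - α + 1) else 0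

/-- PMF of the sum of two independent random variables with pmfs `p`, `q`
(convolution). -/
noncomputable def convPMF (p q : ℤ → ℝ) : ℤ → ℝ :=
  fun k => ∑' i : ℤ, p (k - i) * q i

/-!
The law of `x₁ + x₂` is the mixture, with weights `P(x₂ = i)`, of the laws of the shifts `x₁ + i`,
so by convexity of the `ℓ¹` distance `d_TV(x₁, x₁ + x₂)` is at most the average of
`d_TV(x₁, x₁ + i)` over `i ∈ [α₂, β₂]`. Shifting the uniform law on `N = β₁ - α₁ + 1` points by
`i ≥ 0` only moves mass `1/N` off the `i` leftmost points and onto `i` points past the right end,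
so `d_TV(x₁, x₁ + i) ≤ i / N ≤ β₂ / N`.
-/

open Finset

lemma unifPMF_of_mem {α β k : ℤ} (hk : k ∈ Icc α β) : unifPMF α β k = 1 / ((β : ℝ) - α + 1) :=
  if_pos (mem_Icc.mp hk)

lemma unifPMF_of_notMem {α β k : ℤ} (hk : k ∉ Icc α β) : unifPMF α β k = 0 :=
  if_neg (mt mem_Icc.mpr hk)

lemma Int.cast_sub_add_one_pos {α β : ℤ} (h : α ≤ β) : (0 : ℝ) < β - α + 1 := by
  have : (α : ℝ) ≤ β := by exact_mod_cast h
  linarith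

lemma unifPMF_nonneg (α β k : ℤ) : 0 ≤ unifPMF α β k := by
  unfold unifPMF
  split_ifs with hk
  · exact one_div_nonneg.mpr (Int.cast_sub_add_one_pos (hk.1.trans hk.2)).le
  · exact le_rfl

lemma summable_unifPMF (α β : ℤ) : Summable (unifPMF α β) :=
  summable_of_ne_finset_zero fun _ hk => unifPMF_of_notMem hk

lemma Int.cast_card_Icc_of_le {a b : ℤ} (h : a ≤ b + 1) : ((Icc a b).card : ℝ) = b - a + 1 := by
  rw [show ((Icc a b).card : ℝ) = ((Icc a b).card : ℤ) by norm_cast, Int.card_Icc_of_le a b h]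
  push_cast
  ring

lemma sum_unifPMF {α β : ℤ} (h : α ≤ β) : ∑ k ∈ Icc α β, unifPMF α β k = 1 := by
  have hN := (Int.cast_sub_add_one_pos h).ne'
  rw [sum_congr rfl fun k hk => unifPMF_of_mem hk, sum_const, nsmul_eq_mul,
    Int.cast_card_Icc_of_le (by omega)]
  field_simp

lemma convPMF_eq_sum {p q : ℤ → ℝ} {s : Finset ℤ} (hq : ∀ i ∉ s, q i = 0) (k : ℤ) :
    convPMF p q k = ∑ i ∈ s, p (k - i) * q i :=
  tsum_eq_sum fun i hi => by rw [hq i hi, mul_zero]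

lemma Summable.abs_sub_comp_sub {p : ℤ → ℝ} (hp : Summable p) (i : ℤ) :
    Summable fun k => |p k - p (k - i)| :=
  (hp.sub ((Equiv.subRight i).summable_iff.mpr hp)).abs

section Mixture

variable {p q : ℤ → ℝ} {s : Finset ℤ}

lemma abs_sub_convPMF_le (hq₀ : ∀ i ∈ s, 0 ≤ q i) (hqs : ∀ i ∉ s, q i = 0)
    (hq₁ : ∑ i ∈ s, q i = 1) (k : ℤ) :
    |p k - convPMF p q k| ≤ ∑ i ∈ s, q i * |p k - p (k - i)| := by
  have hmix : p k - convPMF p q k = ∑ i ∈ s, q i * (p k - p (k - i)) := by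
    rw [convPMF_eq_sum hqs, sum_congr rfl fun i _ => mul_sub (q i) (p k) (p (k - i)),
      sum_sub_distrib, ← sum_mul, hq₁, one_mul]
    exact congrArg (p k - ·) (sum_congr rfl fun i _ => mul_comm _ _)
  rw [hmix]
  refine (abs_sum_le_sum_abs _ _).trans (le_of_eq (sum_congr rfl fun i hi => ?_))
  rw [abs_mul, abs_of_nonneg (hq₀ i hi)]

lemma tsum_abs_sub_convPMF_le (hp : Summable p) (hq₀ : ∀ i ∈ s, 0 ≤ q i)
    (hqs : ∀ i ∉ s, q i = 0) (hq₁ : ∑ i ∈ s, q i = 1) :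
    ∑' k, |p k - convPMF p q k| ≤ ∑ i ∈ s, q i * ∑' k, |p k - p (k - i)| := by
  have hterm : ∀ i ∈ s, Summable fun k => q i * |p k - p (k - i)| :=
    fun i _ => (hp.abs_sub_comp_sub i).mul_left (q i)
  have hsum := summable_sum hterm
  have hle := abs_sub_convPMF_le (p := p) hq₀ hqs hq₁
  calc ∑' k, |p k - convPMF p q k|
      ≤ ∑' k, ∑ i ∈ s, q i * |p k - p (k - i)| :=
        (hsum.of_nonneg_of_le (fun _ => abs_nonneg _) hle).tsum_le_tsum hle hsum
    _ = ∑ i ∈ s, q i * ∑' k, |p k - p (k - i)| := by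
        rw [Summable.tsum_finsetSum hterm]
        simp only [tsum_mul_left]

end Mixture

section Shift

variable {α β i : ℤ}

lemma abs_sub_unifPMF_comp_sub_le (h : α ≤ β) (hi : 0 ≤ i) (k : ℤ) :
    |unifPMF α β k - unifPMF α β (k - i)| ≤
      (if k ∈ Icc α (α + i - 1) then 1 / ((β : ℝ) - α + 1) else 0) +
        (if k ∈ Icc (β + 1) (β + i) then 1 / ((β : ℝ) - α + 1) else 0) := by
  have hc : (0 : ℝ) ≤ 1 / ((β : ℝ) - α + 1) := one_div_nonneg.mpr (Int.cast_sub_add_one_pos h).le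
  simp only [unifPMF, mem_Icc]
  split_ifs <;> first
    | (exfalso; omega)
    | (simp only [sub_self, abs_zero, sub_zero, zero_sub, abs_neg, abs_of_nonneg hc]; linarith)

lemma tsum_abs_sub_unifPMF_comp_sub_le (h : α ≤ β) (hi : 0 ≤ i) :
    ∑' k, |unifPMF α β k - unifPMF α β (k - i)| ≤ 2 * i / ((β : ℝ) - α + 1) := by
  set c : ℝ := 1 / ((β : ℝ) - α + 1)
  have hc : 0 ≤ c := one_div_nonneg.mpr (Int.cast_sub_add_one_pos h).le
  have hsupp : ∀ k ∉ Icc α (β + i), |unifPMF α β k - unifPMF α β (k - i)| = 0 := by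
    intro k hk
    rw [mem_Icc] at hk
    rw [unifPMF_of_notMem (by rw [mem_Icc]; omega), unifPMF_of_notMem (by rw [mem_Icc]; omega),
      sub_zero, abs_zero]
  rw [tsum_eq_sum hsupp]
  calc ∑ k ∈ Icc α (β + i), |unifPMF α β k - unifPMF α β (k - i)|
      ≤ ∑ k ∈ Icc α (β + i),
          ((if k ∈ Icc α (α + i - 1) then c else 0) + (if k ∈ Icc (β + 1) (β + i) then c else 0)) :=
        sum_le_sum fun k _ => abs_sub_unifPMF_comp_sub_le h hi k
    _ ≤ (Icc α (α + i - 1)).card * c + (Icc (β + 1) (β + i)).card * c := by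
        rw [sum_add_distrib, sum_ite_mem, sum_ite_mem, sum_const, sum_const, nsmul_eq_mul,
          nsmul_eq_mul]
        gcongr <;> exact inter_subset_right
    _ = 2 * i / ((β : ℝ) - α + 1) := by
        rw [Int.cast_card_Icc_of_le (by omega), Int.cast_card_Icc_of_le (by omega)]
        simp only [c]
        push_cast
        ring

end Shift

/-- If `x₁ ~ Uni[α₁,β₁]` and `x₂ ~ Uni[α₂,β₂]` are independent with
`0 ≤ α₂ ≤ β₂ ≤ β₁ − α₁`, then `d_TV(x₁, x₁+x₂) ≤ β₂/(β₁−α₁+1)`. -/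
theorem tv_uniform_shift (α₁ β₁ α₂ β₂ : ℤ)
    (h0 : 0 ≤ α₂) (h1 : α₂ ≤ β₂) (h2 : β₂ ≤ β₁ - α₁) :
    (1/2 : ℝ) * ∑' k : ℤ, |unifPMF α₁ β₁ k - convPMF (unifPMF α₁ β₁) (unifPMF α₂ β₂) k| ≤
      (β₂ : ℝ) / ((β₁ : ℝ) - α₁ + 1) := by
  have h₁ : α₁ ≤ β₁ := by omega
  have hN := (Int.cast_sub_add_one_pos h₁).le
  have hshift : ∀ i ∈ Icc α₂ β₂,
      ∑' k, |unifPMF α₁ β₁ k - unifPMF α₁ β₁ (k - i)| ≤ 2 * β₂ / ((β₁ : ℝ) - α₁ + 1) := by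
    intro i hi
    rw [mem_Icc] at hi
    refine (tsum_abs_sub_unifPMF_comp_sub_le h₁ (h0.trans hi.1)).trans ?_
    gcongr
    exact_mod_cast hi.2
  calc (1/2 : ℝ) * ∑' k, |unifPMF α₁ β₁ k - convPMF (unifPMF α₁ β₁) (unifPMF α₂ β₂) k|
      ≤ 1/2 * ∑ i ∈ Icc α₂ β₂, unifPMF α₂ β₂ i * (2 * β₂ / ((β₁ : ℝ) - α₁ + 1)) := by
        gcongr
        refine (tsum_abs_sub_convPMF_le (summable_unifPMF α₁ β₁)
          (fun i _ => unifPMF_nonneg α₂ β₂ i) (fun _ hi => unifPMF_of_notMem hi)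
          (sum_unifPMF h1)).trans (sum_le_sum fun i hi => ?_)
        exact mul_le_mul_of_nonneg_left (hshift i hi) (unifPMF_nonneg α₂ β₂ i)
    _ = (β₂ : ℝ) / ((β₁ : ℝ) - α₁ + 1) := by
        rw [← sum_mul, sum_unifPMF h1]
        ring
end

section
/- Let ε > 0 and n ≥ 2. Suppose F is a distribution over n-element sets S ⊆ [N] such that deleting any single order statistic yields nearly identical distributions: d_TV(S₋ᵢ, S₋ⱼ) ≤ ε/n² for all i, j ∈ [n], where S₋ᵢ is S with its i-th smallest element removed. Then for all index sets I, J ⊆ [n] with |I| = |J|, d_TV(S_I, S_J) ≤ ε, where S_I = {s_k : k ∈ I} and s₁ < ... < s_n are the elements of S in increasing order. -/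
open Finset

/-!
Write `S_I` for the random set `{s_k : k ∈ I}`. If `t + 1 ∈ I` and `t ∉ I`, then `S_I` and
`S_{I'}`, where `I'` moves `t + 1` down to `t`, are the images of `S₋ₜ` and `S₋₍ₜ₊₁₎` under one
and the same map (keep the elements whose ranks lie in a fixed set), so by data processing they
are `ε / n²`-close. Each such move lowers `∑ k ∈ I, k` by one, and a set admitting no move is a
lower set. Hence `S_I` is within `(∑ k ∈ I, k) · ε / n²` of `S_L` for the lower set `L` of
size `|I|`, and `∑ k ∈ I, k + ∑ k ∈ J, k ≤ n²`.
-/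

/-- Total variation distance between the pushforward distributions of the
probability mass function `μ` on a finite sample space `Ω` under the maps
`f, g : Ω → Finset ℤ`. -/
noncomputable def pushTV {Ω : Type*} [Fintype Ω] (μ : Ω → ℝ) (f g : Ω → Finset ℤ) : ℝ :=
  (1/2 : ℝ) * ∑' A : Finset ℤ,
    |(∑ ω ∈ Finset.univ.filter (fun ω => f ω = A), μ ω)
      - (∑ ω ∈ Finset.univ.filter (fun ω => g ω = A), μ ω)|

section TotalVariation

variable {Ω : Type*} [Fintype Ω] (μ : Ω → ℝ)

noncomputable def pushMass (f : Ω → Finset ℤ) (A : Finset ℤ) : ℝ :=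
  ∑ ω ∈ univ.filter (fun ω => f ω = A), μ ω

theorem pushMass_eq_zero_of_notMem {f : Ω → Finset ℤ} {A : Finset ℤ}
    (hA : A ∉ univ.image f) : pushMass μ f A = 0 :=
  sum_eq_zero fun ω hω => absurd (mem_image.2 ⟨ω, mem_univ ω, (mem_filter.1 hω).2⟩) hA

theorem pushTV_eq_sum {f g : Ω → Finset ℤ} {t : Finset (Finset ℤ)}
    (hf : univ.image f ⊆ t) (hg : univ.image g ⊆ t) :
    pushTV μ f g = 1 / 2 * ∑ A ∈ t, |pushMass μ f A - pushMass μ g A| := by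
  rw [pushTV, tsum_eq_sum fun A hA => ?_]
  · rfl
  · change |pushMass μ f A - pushMass μ g A| = 0
    rw [pushMass_eq_zero_of_notMem μ fun h => hA (hf h),
      pushMass_eq_zero_of_notMem μ fun h => hA (hg h), sub_self, abs_zero]

theorem pushTV_self (f : Ω → Finset ℤ) : pushTV μ f f = 0 := by
  simp [pushTV]

theorem pushTV_symm (f g : Ω → Finset ℤ) : pushTV μ f g = pushTV μ g f := by
  simp only [pushTV, abs_sub_comm]

theorem pushTV_triangle (f g h : Ω → Finset ℤ) :
    pushTV μ f h ≤ pushTV μ f g + pushTV μ g h := by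
  classical
  have hf : univ.image f ⊆ univ.image f ∪ univ.image g ∪ univ.image h :=
    subset_union_left.trans subset_union_left
  have hg : univ.image g ⊆ univ.image f ∪ univ.image g ∪ univ.image h :=
    subset_union_right.trans subset_union_left
  have hh : univ.image h ⊆ univ.image f ∪ univ.image g ∪ univ.image h := subset_union_right
  rw [pushTV_eq_sum μ hf hh, pushTV_eq_sum μ hf hg, pushTV_eq_sum μ hg hh, ← mul_add,
    ← sum_add_distrib]
  gcongr
  exact abs_sub_le _ _ _

theorem pushMass_comp (φ : Finset ℤ → Finset ℤ) {f : Ω → Finset ℤ} {S : Finset (Finset ℤ)}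
    (hf : univ.image f ⊆ S) (B : Finset ℤ) :
    pushMass μ (fun ω => φ (f ω)) B = ∑ A ∈ S.filter (fun A => φ A = B), pushMass μ f A := by
  simp only [pushMass]
  rw [sum_fiberwise_eq_sum_filter]
  congr 1
  ext ω
  simpa using fun _ => hf (mem_image_of_mem f (mem_univ ω))

theorem pushTV_comp_le (φ : Finset ℤ → Finset ℤ) (f g : Ω → Finset ℤ) :
    pushTV μ (fun ω => φ (f ω)) (fun ω => φ (g ω)) ≤ pushTV μ f g := by
  classical
  set S := univ.image f ∪ univ.image g
  have hf : univ.image f ⊆ S := subset_union_left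
  have hg : univ.image g ⊆ S := subset_union_right
  have hφ : ∀ u : Ω → Finset ℤ, univ.image u ⊆ S → univ.image (fun ω => φ (u ω)) ⊆ S.image φ :=
    fun u hu => image_image (g := φ) ▸ image_subset_image hu
  rw [pushTV_eq_sum μ (hφ f hf) (hφ g hg), pushTV_eq_sum μ hf hg]
  gcongr 1 / 2 * ?_
  calc ∑ B ∈ S.image φ, |pushMass μ (fun ω => φ (f ω)) B - pushMass μ (fun ω => φ (g ω)) B|
      = ∑ B ∈ S.image φ,
          |∑ A ∈ S.filter (fun A => φ A = B), (pushMass μ f A - pushMass μ g A)| := by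
        simp only [pushMass_comp μ φ hf, pushMass_comp μ φ hg, sum_sub_distrib]
    _ ≤ ∑ B ∈ S.image φ, ∑ A ∈ S.filter (fun A => φ A = B), |pushMass μ f A - pushMass μ g A| :=
        sum_le_sum fun B _ => abs_sum_le_sum_abs _ _
    _ = ∑ A ∈ S, |pushMass μ f A - pushMass μ g A| :=
        sum_fiberwise_of_maps_to (fun A hA => mem_image_of_mem φ hA) _

end TotalVariation

noncomputable def selectRanks {α : Type*} [LinearOrder α] {k : ℕ} (Q : Finset (Fin k))
    (A : Finset α) : Finset α :=
  if h : A.card = k then Q.map (A.orderEmbOfFin h).toEmbedding else ∅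

theorem selectRanks_image_univ {α : Type*} [LinearOrder α] {k : ℕ} {f : Fin k → α}
    (hf : StrictMono f) (Q : Finset (Fin k)) : selectRanks Q (univ.image f) = Q.image f := by
  classical
  have hcard : (univ.image f).card = k := by
    rw [card_image_of_injective _ hf.injective, card_univ, Fintype.card_fin]
  rw [selectRanks, dif_pos hcard, map_eq_image]
  congr 1
  exact (orderEmbOfFin_unique hcard (fun x => mem_image_of_mem f (mem_univ x)) hf).symm

namespace Fin

variable {m : ℕ}

theorem succ_succAbove_of_ne {t r : Fin m} (h : r ≠ t) :
    t.succ.succAbove r = t.castSucc.succAbove r := by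
  rcases h.lt_or_gt with h | h
  · rw [succAbove_succ_of_le _ _ h.le, succAbove_castSucc_of_lt _ _ h]
  · rw [succAbove_succ_of_lt _ _ h, succAbove_castSucc_of_le _ _ h.le]

theorem image_castSucc_succAbove_filter {t : Fin m} {I : Finset (Fin (m + 1))}
    (hcast : t.castSucc ∉ I) :
    (univ.filter fun r => t.castSucc.succAbove r ∈ I).image t.castSucc.succAbove = I := by
  ext x
  simp only [mem_image, mem_filter, mem_univ, true_and]
  refine ⟨fun ⟨r, hr, hrx⟩ => hrx ▸ hr, fun hx => ?_⟩
  obtain ⟨r, hr⟩ := exists_succAbove_eq fun h : x = t.castSucc => hcast (h ▸ hx)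
  exact ⟨r, hr ▸ hx, hr⟩

theorem image_succ_succAbove_filter {t : Fin m} {I : Finset (Fin (m + 1))}
    (hsucc : t.succ ∈ I) (hcast : t.castSucc ∉ I) :
    (univ.filter fun r => t.castSucc.succAbove r ∈ I).image t.succ.succAbove =
      insert t.castSucc (I.erase t.succ) := by
  ext x
  simp only [mem_image, mem_filter, mem_univ, true_and, mem_insert, mem_erase]
  constructor
  · rintro ⟨r, hr, rfl⟩
    by_cases hrt : r = t
    · exact .inl (hrt ▸ succAbove_succ_self t)
    · rw [succ_succAbove_of_ne hrt]
      exact .inr ⟨succ_succAbove_of_ne hrt ▸ succAbove_ne _ r, hr⟩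
  · rintro (rfl | ⟨hx, hxI⟩)
    · exact ⟨t, by rwa [succAbove_castSucc_self], succAbove_succ_self _⟩
    · obtain ⟨r, rfl⟩ := exists_succAbove_eq fun h : x = t.castSucc => hcast (h ▸ hxI)
      have hrt : r ≠ t := by rintro rfl; exact hx (succAbove_castSucc_self r)
      exact ⟨r, hxI, succ_succAbove_of_ne hrt⟩

theorem isLowerSet_of_forall_succ_mem {I : Finset (Fin (m + 1))}
    (h : ∀ t : Fin m, t.succ ∈ I → t.castSucc ∈ I) : IsLowerSet (I : Set (Fin (m + 1))) := by
  intro a b hba ha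
  induction a using Fin.induction generalizing b with
  | zero => exact le_zero_iff.1 hba ▸ ha
  | succ t ih =>
    rcases hba.lt_or_eq with hba | rfl
    · exact ih (le_castSucc_iff.2 hba) (h t ha)
    · exact ha

end Fin

theorem Finset.eq_of_isLowerSet_of_card_eq {α : Type*} [LinearOrder α] {L L' : Finset α}
    (hL : IsLowerSet (L : Set α)) (hL' : IsLowerSet (L' : Set α)) (hcard : L.card = L'.card) :
    L = L' := by
  rcases hL.total hL' with h | h
  · exact eq_of_subset_of_card_le (coe_subset.1 h) hcard.ge
  · exact (eq_of_subset_of_card_le (coe_subset.1 h) hcard.le).symm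

theorem Fin.two_mul_sum_val_le_sq {n : ℕ} (I : Finset (Fin n)) :
    2 * ∑ k ∈ I, (k : ℕ) ≤ n ^ 2 := by
  have hI : ∑ k ∈ I, (k : ℕ) ≤ ∑ k ∈ range n, k :=
    (sum_le_sum_of_subset (subset_univ I)).trans (Fin.sum_univ_eq_sum_range (fun k => k) n).le
  have hrange := sum_range_id_mul_two n
  have : n * (n - 1) ≤ n ^ 2 := sq n ▸ Nat.mul_le_mul_left n (Nat.sub_le n 1)
  omega

section OrderStatistics

variable {Ω : Type*} [Fintype Ω] (μ : Ω → ℝ) {m : ℕ} {s : Ω → Fin (m + 1) → ℤ}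

theorem pushTV_image_succAbove_le (hs : ∀ ω, StrictMono (s ω)) (Q : Finset (Fin m))
    (p q : Fin (m + 1)) :
    pushTV μ (fun ω => (Q.image p.succAbove).image (s ω))
        (fun ω => (Q.image q.succAbove).image (s ω)) ≤
      pushTV μ (fun ω => ({p}ᶜ : Finset (Fin (m + 1))).image (s ω))
        (fun ω => ({q}ᶜ : Finset (Fin (m + 1))).image (s ω)) := by
  have hselect : ∀ ω p, selectRanks Q (({p}ᶜ : Finset (Fin (m + 1))).image (s ω)) =
      (Q.image p.succAbove).image (s ω) := fun ω p => by
    rw [← Fin.image_succAbove_univ, image_image,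
      selectRanks_image_univ ((hs ω).comp (Fin.strictMono_succAbove p)), image_image]
  simp only [← hselect]
  exact pushTV_comp_le μ _ _ _

theorem exists_isLowerSet_pushTV_image_le (hs : ∀ ω, StrictMono (s ω)) {δ : ℝ} (hδ : 0 ≤ δ)
    (hdel : ∀ i j : Fin (m + 1),
      pushTV μ (fun ω => ({i}ᶜ : Finset (Fin (m + 1))).image (s ω))
        (fun ω => ({j}ᶜ : Finset (Fin (m + 1))).image (s ω)) ≤ δ)
    (I : Finset (Fin (m + 1))) :
    ∃ L : Finset (Fin (m + 1)), IsLowerSet (L : Set (Fin (m + 1))) ∧ L.card = I.card ∧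
      pushTV μ (fun ω => I.image (s ω)) (fun ω => L.image (s ω)) ≤ (∑ k ∈ I, (k : ℕ)) * δ := by
  induction hI : ∑ k ∈ I, (k : ℕ) using Nat.strong_induction_on generalizing I with
  | _ d ih =>
  by_cases hlow : ∀ t : Fin m, t.succ ∈ I → t.castSucc ∈ I
  · exact ⟨I, Fin.isLowerSet_of_forall_succ_mem hlow, rfl, by rw [pushTV_self]; positivity⟩
  push Not at hlow
  obtain ⟨t, hsucc, hcast⟩ := hlow
  have hstep := pushTV_image_succAbove_le μ hs
    (univ.filter fun r => t.castSucc.succAbove r ∈ I) t.castSucc t.succ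
  rw [Fin.image_castSucc_succAbove_filter hcast,
    Fin.image_succ_succAbove_filter hsucc hcast] at hstep
  set I' := insert t.castSucc (I.erase t.succ)
  have hnotMem : t.castSucc ∉ I.erase t.succ := fun h => hcast (mem_of_mem_erase h)
  have hsum : ∑ k ∈ I', (k : ℕ) + 1 = d := by
    rw [sum_insert hnotMem, ← hI, ← sum_erase_add I _ hsucc, Fin.val_castSucc, Fin.val_succ]
    ring
  have hcard : I'.card = I.card := by
    rw [card_insert_of_notMem hnotMem, card_erase_add_one hsucc]
  obtain ⟨L, hL, hLcard, hLdist⟩ := ih _ (by omega) I' rfl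
  refine ⟨L, hL, hLcard.trans hcard, ?_⟩
  calc pushTV μ (fun ω => I.image (s ω)) (fun ω => L.image (s ω))
      ≤ pushTV μ (fun ω => I.image (s ω)) (fun ω => I'.image (s ω)) +
          pushTV μ (fun ω => I'.image (s ω)) (fun ω => L.image (s ω)) := pushTV_triangle μ _ _ _
    _ ≤ δ + (∑ k ∈ I', (k : ℕ)) * δ := add_le_add (hstep.trans (hdel _ _)) hLdist
    _ = d * δ := by rw [← hsum]; push_cast; ring

end OrderStatistics

theorem osi_amplification_general {Ω : Type*} [Fintype Ω] (n : ℕ) (hn : 2 ≤ n)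
    (ε : ℝ)
    (μ : Ω → ℝ)
    (s : Ω → Fin n → ℤ)
    (hmono : ∀ ω, StrictMono (s ω))
    (hdel : ∀ i j : Fin n,
      pushTV μ (fun ω => Finset.image (s ω) ({i}ᶜ : Finset (Fin n)))
               (fun ω => Finset.image (s ω) ({j}ᶜ : Finset (Fin n))) ≤ ε / n ^ 2) :
    ∀ I J : Finset (Fin n), I.card = J.card →
      pushTV μ (fun ω => Finset.image (s ω) I) (fun ω => Finset.image (s ω) J) ≤ ε := by
  intro I J hIJ
  obtain ⟨m, rfl⟩ : ∃ m, n = m + 1 := ⟨n - 1, by omega⟩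
  set δ := ε / ((m + 1 : ℕ) : ℝ) ^ 2
  have hδ : 0 ≤ δ := (pushTV_self μ _).symm.le.trans (hdel 0 0)
  obtain ⟨L, hL, hLI, hIL⟩ := exists_isLowerSet_pushTV_image_le μ hmono hδ hdel I
  obtain ⟨L', hL', hL'J, hJL'⟩ := exists_isLowerSet_pushTV_image_le μ hmono hδ hdel J
  obtain rfl : L = L' := eq_of_isLowerSet_of_card_eq hL hL' (by rw [hLI, hL'J, hIJ])
  have hsum :
      ((∑ k ∈ I, (k : ℕ) : ℕ) : ℝ) + ((∑ k ∈ J, (k : ℕ) : ℕ) : ℝ) ≤ ((m + 1 : ℕ) : ℝ) ^ 2 := by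
    exact_mod_cast (by linarith [Fin.two_mul_sum_val_le_sq I, Fin.two_mul_sum_val_le_sq J] :
      ∑ k ∈ I, (k : ℕ) + ∑ k ∈ J, (k : ℕ) ≤ (m + 1) ^ 2)
  calc pushTV μ (fun ω => I.image (s ω)) (fun ω => J.image (s ω))
      ≤ pushTV μ (fun ω => I.image (s ω)) (fun ω => L.image (s ω)) +
          pushTV μ (fun ω => L.image (s ω)) (fun ω => J.image (s ω)) := pushTV_triangle μ _ _ _
    _ ≤ (∑ k ∈ I, (k : ℕ)) * δ + (∑ k ∈ J, (k : ℕ)) * δ :=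
        add_le_add hIL (pushTV_symm μ _ _ ▸ hJL')
    _ ≤ ((m + 1 : ℕ) : ℝ) ^ 2 * δ := by rw [← add_mul]; gcongr
    _ = ε := mul_div_cancel₀ ε (by positivity)

/-- If a random `n`-element set `S ⊆ [N]` (given by its sorted listing
`s : Ω → Fin n → ℤ`) satisfies `d_TV(S₋ᵢ, S₋ⱼ) ≤ ε/n²` for all single-element
deletions of order statistics, then `d_TV(S_I, S_J) ≤ ε` for all index sets
`I, J ⊆ [n]` with `|I| = |J|`. -/
theorem osi_amplification {Ω : Type*} [Fintype Ω] (n N : ℕ) (hn : 2 ≤ n)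
    (ε : ℝ) (hε : 0 < ε)
    (μ : Ω → ℝ) (hμ0 : ∀ ω, 0 ≤ μ ω) (hμ1 : ∑ ω, μ ω = 1)
    (s : Ω → Fin n → ℤ)
    (hmono : ∀ ω, StrictMono (s ω))
    (hrange : ∀ ω k, 1 ≤ s ω k ∧ s ω k ≤ (N : ℤ))
    (hdel : ∀ i j : Fin n,
      pushTV μ (fun ω => Finset.image (s ω) ({i}ᶜ : Finset (Fin n)))
               (fun ω => Finset.image (s ω) ({j}ᶜ : Finset (Fin n))) ≤ ε / n ^ 2) :
    ∀ I J : Finset (Fin n), I.card = J.card →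
      pushTV μ (fun ω => Finset.image (s ω) I) (fun ω => Finset.image (s ω) J) ≤ ε :=
  osi_amplification_general n hn ε μ s hmono hdel
end

section
/- If positive integers d_{i−2}, d_{i−1}, d_i ≥ 20 satisfy the level-(ℓ−1) condition d_i ≥ L_{ℓ−1}·d_{i−1} and d_{i−1} ≥ L_{ℓ−1}·d_{i−2} with L_{ℓ−1} ≥ 2, and L_ℓ is an integer with L_ℓ ≤ (20·(L_{ℓ−1}² + L_{ℓ−1}) − 4)/24, and g_{i−1}, g_{i−2} are integers with |g_{i−1} − (d_{i−1}+d_i)| ≤ 2 and |g_{i−2} − d_{i−2}| ≤ 2, then g_{i−1} ≥ L_ℓ·g_{i−2} + 2·L_ℓ + 2. -/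
/-- Exp-Gaps level claim: if positive integers `d_{i−2}, d_{i−1}, d_i ≥ 20`
satisfy the level-(ℓ−1) condition `d_i ≥ L' d_{i−1}` and `d_{i−1} ≥ L' d_{i−2}`
with `L' ≥ 2`, and `L` is an integer with `L ≤ (20(L'² + L') − 4)/24`, and
`|g_{i−1} − (d_{i−1}+d_i)| ≤ 2`, `|g_{i−2} − d_{i−2}| ≤ 2`, then
`g_{i−1} ≥ L·g_{i−2} + 2L + 2`. -/
theorem expgaps_level_step (dm2 dm1 di L' L gm1 gm2 : ℤ)
    (h2 : 20 ≤ dm2) (h1 : 20 ≤ dm1) (h0 : 20 ≤ di)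
    (hL' : 2 ≤ L')
    (hlev1 : L' * dm1 ≤ di) (hlev2 : L' * dm2 ≤ dm1)
    (hL : (L : ℚ) ≤ (20 * ((L' : ℚ) ^ 2 + (L' : ℚ)) - 4) / 24)
    (hg1 : |gm1 - (dm1 + di)| ≤ 2) (hg2 : |gm2 - dm2| ≤ 2) :
    L * gm2 + 2 * L + 2 ≤ gm1 := by
  have hK : 24 * L ≤ 20 * (L' ^ 2 + L') - 4 := by
    have : (24 * L : ℚ) ≤ 20 * ((L' : ℚ) ^ 2 + (L' : ℚ)) - 4 := by linarith
    exact_mod_cast this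
  rw [abs_le] at hg1 hg2
  have hL'0 : (0:ℤ) ≤ L' := by linarith
  have hdi : L' * (L' * dm2) ≤ di :=
    le_trans (mul_le_mul_of_nonneg_left hlev2 hL'0) hlev1
  rcases le_or_gt L 0 with hLn | hLp
  · have h18 : (0:ℤ) ≤ (-L) * (gm2 - 18) :=
      mul_nonneg (by linarith) (by linarith [hg2.1])
    nlinarith [hg1.1, hg2.1]
  · have hgm2 : L * gm2 ≤ L * (dm2 + 2) :=
      mul_le_mul_of_nonneg_left (by linarith [hg2.2]) (by linarith)
    have hKL : (0:ℤ) ≤ (L' ^ 2 + L' - L) * (dm2 - 20) := by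
      apply mul_nonneg
      · nlinarith
      · linarith
    nlinarith [hg1.1]
end
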